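/- arXiv:2508.16945 — 2 statements merged into one kernel-verified Lean document; each statement's English description precedes it below -/
import Mathlib

section
/- Let A be a noncommutative connected ℕ-graded k-algebra with A_1 ≠ 0, and let A_com denote the (unital) k-subalgebra of A generated by the set of all commutators [a,b] = ab − ba with a, b ∈ A. Then A_com is Aut-stable, A_com ≠ k·1, and A_com ≠ A (i.e. A_com is a nontrivial Aut-stable subalgebra of A). -/
open DirectSum

section Aux

variable {k A : Type*} [Field k] [Ring A] [Algebra k A]
  (𝒜 : ℕ → Submodule k A) [GradedAlgebra 𝒜]

/-- Degree-zero components are central when `𝒜 0 = k·1`. -/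
lemma aux_central (hconn : 𝒜 0 = (1 : Submodule k A)) (x y : A) :
    (DirectSum.decompose 𝒜 x 0 : A) * y = y * (DirectSum.decompose 𝒜 x 0 : A) := by
  have key : ∀ w : A, w ∈ 𝒜 0 → w * y = y * w := by
    intro w hw
    rw [hconn, Submodule.mem_one] at hw
    obtain ⟨c, rfl⟩ := hw
    rw [← Algebra.commutes]
  exact key _ (SetLike.coe_mem _)

/-- Degree-one component of a product. -/
lemma aux_prod_one (x y : A) :
    (DirectSum.decompose 𝒜 (x * y) 1 : A) =
      (DirectSum.decompose 𝒜 x 0 : A) * (DirectSum.decompose 𝒜 y 1 : A) +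
        (DirectSum.decompose 𝒜 x 1 : A) * (DirectSum.decompose 𝒜 y 0 : A) := by
  classical
  rw [DirectSum.decompose_mul, DirectSum.coe_mul_apply]
  have hsub : (((DirectSum.decompose 𝒜 x).support ×ˢ (DirectSum.decompose 𝒜 y).support).filter
      (fun ij : ℕ × ℕ => ij.1 + ij.2 = 1)) ⊆ ({(0,1), (1,0)} : Finset (ℕ × ℕ)) := by
    intro ij hij
    simp only [Finset.mem_filter] at hij
    have := hij.2
    simp only [Finset.mem_insert, Finset.mem_singleton]
    rcases ij with ⟨i, j⟩
    rcases (by omega : i = 0 ∧ j = 1 ∨ i = 1 ∧ j = 0) with ⟨h1, h2⟩ | ⟨h1, h2⟩ <;>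
      simp [h1, h2]
  rw [Finset.sum_subset hsub]
  · rw [Finset.sum_pair (by decide)]
  · intro ij hij hnij
    simp only [Finset.mem_insert, Finset.mem_singleton] at hij
    simp only [Finset.mem_filter, Finset.mem_product, not_and, not_and_or] at hnij
    rcases hij with h | h <;> subst h
    · rcases (by tauto : (0 : ℕ) ∉ (DirectSum.decompose 𝒜 x).support ∨
          (1 : ℕ) ∉ (DirectSum.decompose 𝒜 y).support) with h | h <;>
        rw [DFinsupp.notMem_support_iff] at h <;> simp [h]
    · rcases (by tauto : (1 : ℕ) ∉ (DirectSum.decompose 𝒜 x).support ∨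
          (0 : ℕ) ∉ (DirectSum.decompose 𝒜 y).support) with h | h <;>
        rw [DFinsupp.notMem_support_iff] at h <;> simp [h]

/-- Degree-one component of a commutator vanishes. -/
lemma aux_comm_one (hconn : 𝒜 0 = (1 : Submodule k A)) (a b : A) :
    (DirectSum.decompose 𝒜 (a * b - b * a) 1 : A) = 0 := by
  rw [DirectSum.decompose_sub, DirectSum.sub_apply, AddSubgroupClass.coe_sub,
    aux_prod_one, aux_prod_one, aux_central 𝒜 hconn a, aux_central 𝒜 hconn b]
  abel

/-- Degree-zero component of a commutator vanishes. -/
lemma aux_comm_zero (hconn : 𝒜 0 = (1 : Submodule k A)) (a b : A) :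
    (DirectSum.decompose 𝒜 (a * b - b * a) 0 : A) = 0 := by
  have h := map_mul (GradedRing.projZeroRingHom 𝒜) a b
  have h' := map_mul (GradedRing.projZeroRingHom 𝒜) b a
  simp only [GradedRing.projZeroRingHom_apply] at h h'
  rw [DirectSum.decompose_sub, DirectSum.sub_apply, AddSubgroupClass.coe_sub, h, h',
    aux_central 𝒜 hconn a]
  exact sub_self _

end Aux

/-- A noncommutative connected ℕ-graded algebra over a field `k` with nonzero degree-one
component: the subalgebra generated by all commutators is a nontrivial Aut-stable
subalgebra. -/
theorem commutatorSubalgebra_nontrivial_autStable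
    (k A : Type*) [Field k] [Ring A] [Algebra k A]
    (𝒜 : ℕ → Submodule k A) [GradedAlgebra 𝒜]
    (hconn : 𝒜 0 = (1 : Submodule k A))
    (hnoncomm : ∃ a b : A, a * b ≠ b * a)
    (h1 : 𝒜 1 ≠ ⊥) :
    (∀ σ : A ≃ₐ[k] A, ∀ x ∈ Algebra.adjoin k {x : A | ∃ a b : A, x = a * b - b * a},
        σ x ∈ Algebra.adjoin k {x : A | ∃ a b : A, x = a * b - b * a}) ∧
      Algebra.adjoin k {x : A | ∃ a b : A, x = a * b - b * a} ≠ ⊥ ∧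
      Algebra.adjoin k {x : A | ∃ a b : A, x = a * b - b * a} ≠ ⊤ := by
  set S : Set A := {x : A | ∃ a b : A, x = a * b - b * a} with hS
  refine ⟨?_, ?_, ?_⟩
  · -- Aut-stability
    intro σ x hx
    have hmap : (Algebra.adjoin k S).map σ.toAlgHom = Algebra.adjoin k (σ.toAlgHom '' S) :=
      AlgHom.map_adjoin _ _
    have hsub : σ.toAlgHom '' S ⊆ S := by
      rintro _ ⟨y, ⟨a, b, rfl⟩, rfl⟩
      exact ⟨σ a, σ b, by simp [mul_comm]⟩
    have : σ x ∈ (Algebra.adjoin k S).map σ.toAlgHom := ⟨x, hx, rfl⟩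
    rw [hmap] at this
    exact Algebra.adjoin_mono hsub this
  · -- ≠ ⊥
    intro hbot
    obtain ⟨a, b, hab⟩ := hnoncomm
    have hmem : a * b - b * a ∈ Algebra.adjoin k S := Algebra.subset_adjoin ⟨a, b, rfl⟩
    rw [hbot, Algebra.mem_bot] at hmem
    obtain ⟨c, hc⟩ := hmem
    have hmem0 : a * b - b * a ∈ 𝒜 0 := by
      rw [hconn, Submodule.mem_one]; exact ⟨c, hc⟩
    have h0 : (DirectSum.decompose 𝒜 (a * b - b * a) 0 : A) = a * b - b * a :=
      DirectSum.decompose_of_mem_same 𝒜 hmem0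
    rw [aux_comm_zero 𝒜 hconn] at h0
    exact hab (sub_eq_zero.mp h0.symm)
  · -- ≠ ⊤
    intro htop
    obtain ⟨z, hz𝒜, hz0⟩ := (Submodule.ne_bot_iff _).mp h1
    have hall : ∀ x ∈ Algebra.adjoin k S, (DirectSum.decompose 𝒜 x 1 : A) = 0 := by
      intro x hx
      induction hx using Algebra.adjoin_induction with
      | mem y hy => obtain ⟨a, b, rfl⟩ := hy; exact aux_comm_one 𝒜 hconn a b
      | algebraMap r =>
          have hmem : algebraMap k A r ∈ 𝒜 0 := by
            rw [hconn, Submodule.mem_one]; exact ⟨r, rfl⟩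
          have := DirectSum.decompose_of_mem_ne 𝒜 hmem (by norm_num : (0 : ℕ) ≠ 1)
          exact this
      | add x y _ _ hx hy =>
          rw [DirectSum.decompose_add, DirectSum.add_apply, AddMemClass.coe_add, hx, hy, add_zero]
      | mul x y _ _ hx hy => rw [aux_prod_one, hx, hy, mul_zero, zero_mul, add_zero]
    have := hall z (htop ▸ Algebra.mem_top)
    rw [DirectSum.decompose_of_mem_same 𝒜 hz𝒜] at this
    exact hz0 this
end

section
/- If n is even, then the subalgebra of the Grassmann algebra E on n generators that is generated by all commutators [a,b] = ab − ba coincides with the center of E, i.e. E_com = Z(E). -/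
/-!
Even elements of an exterior algebra are central, because `ι m * x = involute x * ι m`. A
commutator only sees the odd parts, `[a, b] = [a₁, b₁]`, so it is even; conversely, when `2` is
invertible the even part is generated by the commutators `[ι u, ι v] = 2 ι u ι v`. Hence both
sides equal the even part, once we know that a central element has no odd part `z₁`. Such a `z₁`
is central and anticommutes with vectors, so `ι m * z₁ = 0` for all `m`. Contracting with a dual
basis then writes `z₁ = e₁ ∧ ⋯ ∧ eₙ ∧ w`, a multiple of the top form, which has parity `n`. For
`n` even, `z₁` is thus both odd and even, hence `0`.
-/

open CliffordAlgebra Module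

namespace CliffordAlgebra

variable {R M : Type*} [CommRing R] [AddCommGroup M] [Module R M]

theorem exists_even_add_odd {Q : QuadraticForm R M} (x : CliffordAlgebra Q) :
    ∃ x₀ ∈ evenOdd Q 0, ∃ x₁ ∈ evenOdd Q 1, x₀ + x₁ = x :=
  Submodule.mem_sup.mp ((evenOdd_isCompl Q).sup_eq_top ▸ Submodule.mem_top)

end CliffordAlgebra

namespace ExteriorAlgebra

section CommRing

variable {R M : Type*} [CommRing R] [AddCommGroup M] [Module R M]

theorem ι_mul_eq_involute_mul_ι (m : M) (x : ExteriorAlgebra R M) :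
    ι R m * x = involute x * ι R m := by
  induction x using CliffordAlgebra.induction with
  | algebraMap r => rw [AlgHom.commutes]; exact (Algebra.commutes r _).symm
  | ι m' => rw [involute_ι, neg_mul, eq_neg_iff_add_eq_zero, ι_add_mul_swap]
  | mul a b ha hb => rw [← mul_assoc, ha, mul_assoc, hb, map_mul, mul_assoc]
  | add a b ha hb => rw [mul_add, ha, hb, map_add, add_mul]

theorem mem_center_of_mem_evenOdd_zero {x : ExteriorAlgebra R M}
    (hx : x ∈ evenOdd (0 : QuadraticForm R M) 0) :
    x ∈ Subalgebra.center R (ExteriorAlgebra R M) := by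
  rw [Subalgebra.mem_center_iff]
  intro y
  induction y using CliffordAlgebra.induction with
  | algebraMap r => exact Algebra.commutes r x
  | ι m => rw [ι_mul_eq_involute_mul_ι, involute_eq_of_mem_even hx]
  | mul a b ha hb => rw [mul_assoc, hb, ← mul_assoc, ha, mul_assoc]
  | add a b ha hb => rw [add_mul, ha, hb, mul_add]

theorem commutator_mem_evenOdd_zero (a b : ExteriorAlgebra R M) :
    a * b - b * a ∈ evenOdd (0 : QuadraticForm R M) 0 := by
  obtain ⟨a₀, ha₀, a₁, ha₁, rfl⟩ := exists_even_add_odd a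
  obtain ⟨b₀, hb₀, b₁, hb₁, rfl⟩ := exists_even_add_odd b
  have ha := Subalgebra.mem_center_iff.mp (mem_center_of_mem_evenOdd_zero ha₀)
  have hb := Subalgebra.mem_center_iff.mp (mem_center_of_mem_evenOdd_zero hb₀)
  have hodd : (a₀ + a₁) * (b₀ + b₁) - (b₀ + b₁) * (a₀ + a₁) = a₁ * b₁ - b₁ * a₁ := by
    simp only [add_mul, mul_add, ha b₀, ha b₁, hb a₁]
    abel
  have hsum : (1 + 1 : ZMod 2) = 0 := rfl
  rw [hodd, ← hsum]
  exact sub_mem (SetLike.mul_mem_graded ha₁ hb₁) (SetLike.mul_mem_graded hb₁ ha₁)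

theorem mem_adjoin_commutators_of_mem_evenOdd_zero [Invertible (2 : R)]
    {x : ExteriorAlgebra R M} (hx : x ∈ evenOdd (0 : QuadraticForm R M) 0) :
    x ∈ Algebra.adjoin R {x : ExteriorAlgebra R M | ∃ a b, x = a * b - b * a} := by
  induction x, hx using even_induction with
  | algebraMap r => exact Subalgebra.algebraMap_mem _ r
  | add x y _ _ ihx ihy => exact add_mem ihx ihy
  | ι_mul_ι_mul m₁ m₂ x _ ih =>
    refine mul_mem ?_ ih
    have hhalf : ι R m₁ * ι R m₂ = (⅟2 : R) • (ι R m₁ * ι R m₂ - ι R m₂ * ι R m₁) := by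
      rw [eq_neg_of_add_eq_zero_right (ι_add_mul_swap m₁ m₂), sub_neg_eq_add, smul_add,
        invOf_two_smul_add_invOf_two_smul]
    rw [hhalf]
    refine Subalgebra.smul_mem _ (Algebra.subset_adjoin ?_) _
    exact ⟨_, _, rfl⟩

theorem ι_mul_eq_zero_of_mem_center_of_mem_evenOdd_one [Invertible (2 : R)]
    {z : ExteriorAlgebra R M} (hz : z ∈ Subalgebra.center R (ExteriorAlgebra R M))
    (hz₁ : z ∈ evenOdd (0 : QuadraticForm R M) 1) (m : M) : ι R m * z = 0 := by
  have hneg : ι R m * z = -(ι R m * z) := calc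
    ι R m * z = involute z * ι R m := ι_mul_eq_involute_mul_ι m z
    _ = -(z * ι R m) := by rw [involute_eq_of_mem_odd hz₁, neg_mul]
    _ = -(ι R m * z) := by rw [Subalgebra.mem_center_iff.mp hz]
  calc ι R m * z = (⅟2 : R) • (ι R m * z) + ⅟2 • (ι R m * z) :=
        (invOf_two_smul_add_invOf_two_smul R _).symm
    _ = 0 := by nth_rw 2 [hneg]; rw [smul_neg, add_neg_cancel]

theorem ιMulti_mem_evenOdd {n : ℕ} (v : Fin n → M) :
    ιMulti R n v ∈ evenOdd (0 : QuadraticForm R M) n :=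
  Submodule.mem_iSup_of_mem ⟨n, rfl⟩ (ιMulti_range R n ⟨v, rfl⟩)

theorem exists_eq_ιMulti_mul {n : ℕ} (v : Fin n → M) (d : Fin n → Dual R M)
    (hd : ∀ i j, d i (v j) = if j = i then 1 else 0) {z : ExteriorAlgebra R M}
    (hz : ∀ i, ι R (v i) * z = 0) : ∃ w, z = ιMulti R n v * w := by
  induction n generalizing z with
  | zero => exact ⟨z, by rw [ιMulti_zero_apply, one_mul]⟩
  | succ n ih =>
    have hcontract : ∀ i, d 0 (v i) • z = ι R (v i) * contractLeft (d 0) z := fun i => by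
      rw [← sub_eq_zero, ← contractLeft_ι_mul, hz, map_zero]
    obtain ⟨w, hw⟩ := ih (Matrix.vecTail v) (Matrix.vecTail d)
      (fun i j => by simp only [Matrix.vecTail, Function.comp_apply, hd, Fin.succ_inj])
      (z := contractLeft (d 0) z) fun i => by
        rw [Matrix.vecTail, Function.comp_apply, ← hcontract, hd, if_neg (Fin.succ_ne_zero i),
          zero_smul]
    refine ⟨w, ?_⟩
    rw [ιMulti_succ_apply, mul_assoc, ← hw, ← hcontract, hd, if_pos rfl, one_smul]

theorem mul_mem_span_singleton_of_mul_ι_eq_zero {P : ExteriorAlgebra R M}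
    (hP : ∀ m, P * ι R m = 0) (w : ExteriorAlgebra R M) : P * w ∈ R ∙ P := by
  induction w using CliffordAlgebra.induction with
  | algebraMap r =>
    rw [← Algebra.commutes, ← Algebra.smul_def]
    exact Submodule.smul_mem _ _ (Submodule.mem_span_singleton_self P)
  | ι m => rw [hP]; exact zero_mem _
  | mul a b ha hb =>
    obtain ⟨c, hc⟩ := Submodule.mem_span_singleton.mp ha
    rw [← mul_assoc, ← hc, smul_mul_assoc]
    exact Submodule.smul_mem _ c hb
  | add a b ha hb => rw [mul_add]; exact add_mem ha hb

end CommRing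

section Field

variable {K M : Type*} [Field K] [AddCommGroup M] [Module K M] [FiniteDimensional K M]

theorem ιMulti_eq_zero_of_finrank_lt {n : ℕ} (v : Fin n → M) (h : finrank K M < n) :
    ιMulti K n v = 0 :=
  (ιMulti K n).map_linearDependent v fun hv => h.not_ge (by simpa using hv.fintype_card_le_finrank)

theorem ιMulti_mul_ι_eq_zero {n : ℕ} (v : Fin n → M) (h : finrank K M ≤ n) (m : M) :
    ιMulti K n v * ι K m = 0 := by
  have := ιMulti_mul_ιMulti (R := K) v ![m]
  rw [ιMulti_eq_zero_of_finrank_lt _ (Nat.lt_succ_of_le h)] at this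
  simpa using this

theorem eq_zero_of_mem_evenOdd_one_of_forall_ι_mul_eq_zero (heven : Even (finrank K M))
    {z : ExteriorAlgebra K M} (hz₁ : z ∈ evenOdd (0 : QuadraticForm K M) 1)
    (hz : ∀ m, ι K m * z = 0) : z = 0 := by
  let b := Module.finBasis K M
  obtain ⟨w, rfl⟩ := exists_eq_ιMulti_mul b b.coord
    (fun i j => by rw [Basis.coord_apply, Basis.repr_self, Finsupp.single_apply])
    fun i => hz (b i)
  have hP := ιMulti_mem_evenOdd (R := K) b
  rw [heven.natCast_zmod_two] at hP
  obtain ⟨c, hc⟩ := Submodule.mem_span_singleton.mp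
    (mul_mem_span_singleton_of_mul_ι_eq_zero (ιMulti_mul_ι_eq_zero b le_rfl) w)
  exact Submodule.disjoint_def.mp (evenOdd_isCompl _).disjoint _
    (hc ▸ Submodule.smul_mem _ c hP) hz₁

theorem mem_evenOdd_zero_of_mem_center (h2 : (2 : K) ≠ 0) (heven : Even (finrank K M))
    {z : ExteriorAlgebra K M} (hz : z ∈ Subalgebra.center K (ExteriorAlgebra K M)) :
    z ∈ evenOdd (0 : QuadraticForm K M) 0 := by
  let _ : Invertible (2 : K) := invertibleOfNonzero h2
  obtain ⟨z₀, hz₀, z₁, hz₁, rfl⟩ := exists_even_add_odd z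
  have hz₁c : z₁ ∈ Subalgebra.center K (ExteriorAlgebra K M) := by
    simpa using sub_mem hz (mem_center_of_mem_evenOdd_zero hz₀)
  rwa [eq_zero_of_mem_evenOdd_one_of_forall_ι_mul_eq_zero heven hz₁
    (ι_mul_eq_zero_of_mem_center_of_mem_evenOdd_one hz₁c hz₁), add_zero]

theorem adjoin_commutators_eq_center (h2 : (2 : K) ≠ 0) (heven : Even (finrank K M)) :
    Algebra.adjoin K {x : ExteriorAlgebra K M | ∃ a b, x = a * b - b * a}
      = Subalgebra.center K (ExteriorAlgebra K M) := by
  let _ : Invertible (2 : K) := invertibleOfNonzero h2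
  refine le_antisymm (Algebra.adjoin_le ?_) fun z hz => ?_
  · rintro _ ⟨a, b, rfl⟩
    exact mem_center_of_mem_evenOdd_zero (commutator_mem_evenOdd_zero a b)
  · exact mem_adjoin_commutators_of_mem_evenOdd_zero (mem_evenOdd_zero_of_mem_center h2 heven hz)

end Field

end ExteriorAlgebra

theorem grassmann_commutatorSubalgebra_eq_center_general (k : Type*) [Field k]
    (hk : (2 : k) ≠ 0) (n : ℕ) (hne : Even n) :
    Algebra.adjoin k {x : ExteriorAlgebra k (Fin n → k) |
        ∃ a b : ExteriorAlgebra k (Fin n → k), x = a * b - b * a}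
      = Subalgebra.center k (ExteriorAlgebra k (Fin n → k)) :=
  ExteriorAlgebra.adjoin_commutators_eq_center hk (by rwa [Module.finrank_fin_fun])

/-- If `n` is even, the subalgebra of the Grassmann algebra on `n` generators generated
by all commutators coincides with the center. -/
theorem grassmann_commutatorSubalgebra_eq_center (k : Type*) [Field k]
    (hk : (2 : k) ≠ 0) (n : ℕ) (hn : 1 ≤ n) (hne : Even n) :
    Algebra.adjoin k {x : ExteriorAlgebra k (Fin n → k) |
        ∃ a b : ExteriorAlgebra k (Fin n → k), x = a * b - b * a}
      = Subalgebra.center k (ExteriorAlgebra k (Fin n → k)) :=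
  grassmann_commutatorSubalgebra_eq_center_general k hk n hne
end
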